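/- arXiv:2105.03096 — 11 statements merged into one kernel-verified Lean document; each statement's English description precedes it below -/
import Mathlib

section
/- A half space (k,c) is t-inductive if and only if there is no vector x ∈ ℕ^n with c ≤ k·x + k·t⁻ < c − k·tΔ. -/
open Finset

def dot {n : ℕ} (k v : Fin n → ℤ) : ℤ := ∑ i, k i * v i

def tDelta {n : ℕ} (tm tp : Fin n → ℕ) : Fin n → ℤ := fun i => (tp i : ℤ) - (tm i : ℤ)

def natCast {n : ℕ} (m : Fin n → ℕ) : Fin n → ℤ := fun i => (m i : ℤ)

def TInductive {n : ℕ} (k : Fin n → ℤ) (c : ℤ) (tm tp : Fin n → ℕ) : Prop :=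
  ∀ m : Fin n → ℕ, (∀ i, tm i ≤ m i) → c ≤ dot k (natCast m) →
    c ≤ dot k (fun i => (m i : ℤ) + tDelta tm tp i)

lemma dot_add {n : ℕ} (k u v : Fin n → ℤ) :
    dot k (fun i => u i + v i) = dot k u + dot k v := by
  simp [dot, mul_add, Finset.sum_add_distrib]

theorem stmt0 (n : ℕ) (hn : 1 ≤ n) (k : Fin n → ℤ) (c : ℤ) (tm tp : Fin n → ℕ) :
    TInductive k c tm tp ↔
      ¬ ∃ x : Fin n → ℕ,
        c ≤ dot k (natCast x) + dot k (natCast tm) ∧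
        dot k (natCast x) + dot k (natCast tm) < c - dot k (tDelta tm tp) := by
  constructor
  · rintro hInd ⟨x, h1, h2⟩
    set m : Fin n → ℕ := fun i => x i + tm i with hm
    have hdm : dot k (natCast m) = dot k (natCast x) + dot k (natCast tm) := by
      have : natCast m = fun i => natCast x i + natCast tm i := by
        funext i; simp [natCast, hm]
      rw [this, dot_add]
    have hge : ∀ i, tm i ≤ m i := fun i => Nat.le_add_left _ _
    have hc : c ≤ dot k (natCast m) := by rw [hdm]; exact h1
    have := hInd m hge hc
    have heq : dot k (fun i => (m i : ℤ) + tDelta tm tp i)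
        = dot k (natCast m) + dot k (tDelta tm tp) := dot_add k (natCast m) _
    rw [heq, hdm] at this
    linarith
  · intro hno m hge hc
    set x : Fin n → ℕ := fun i => m i - tm i with hx
    have hdm : dot k (natCast m) = dot k (natCast x) + dot k (natCast tm) := by
      have : natCast m = fun i => natCast x i + natCast tm i := by
        funext i
        simp only [natCast, hx]
        have := hge i
        omega
      rw [this, dot_add]
    have heq : dot k (fun i => (m i : ℤ) + tDelta tm tp i)
        = dot k (natCast m) + dot k (tDelta tm tp) := dot_add k (natCast m) _
    rw [heq]
    by_contra hlt
    exact hno ⟨x, by rw [← hdm]; exact hc, by rw [← hdm]; linarith⟩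
end

section
/- Let (k,c) be t-inductive with k·tΔ < 0 (not oriented towards t). Then k ≥ 0 componentwise or k ≤ 0 componentwise; i.e., there are no indices i, j with k(i) > 0 and k(j) < 0. -/
open Finset

lemma dot_add_nsmul {n : ℕ} (k : Fin n → ℤ) (f g : Fin n → ℕ) (N : ℕ) :
    dot k (natCast fun p => f p + N * g p)
      = dot k (natCast f) + (N : ℤ) * dot k (natCast g) := by
  simp only [dot, natCast, Finset.mul_sum, ← Finset.sum_add_distrib]
  refine Finset.sum_congr rfl ?_
  intro p _
  push_cast
  ring

lemma dot_natCast_add {n : ℕ} (k : Fin n → ℤ) (f g : Fin n → ℕ) :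
    dot k (natCast fun p => f p + g p) = dot k (natCast f) + dot k (natCast g) := by
  simp only [dot, natCast, ← Finset.sum_add_distrib]
  refine Finset.sum_congr rfl ?_
  intro p _
  push_cast
  ring

lemma dot_single {n : ℕ} (k : Fin n → ℤ) (j : Fin n) (s : ℕ) :
    dot k (natCast fun p => if p = j then s else 0) = k j * s := by
  simp only [dot, natCast, apply_ite (fun z : ℕ => (z : ℤ)), Nat.cast_zero,
    mul_ite, mul_zero]
  simp [Finset.sum_ite_eq']

lemma iter_lemma {n : ℕ} (k : Fin n → ℤ) (c : ℤ) (tm tp : Fin n → ℕ)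
    (hind : TInductive k c tm tp) :
    ∀ N (a : Fin n → ℕ), (∀ p, tm p ≤ a p) →
      c ≤ dot k (natCast fun p => a p + N * tm p) →
      c ≤ dot k (natCast fun p => a p + N * tp p) := by
  intro N
  induction N with
  | zero => intro a ha h; simpa using h
  | succ N ih =>
    intro a ha h
    have h1 := hind (fun p => a p + (N + 1) * tm p)
      (fun p => le_trans (ha p) (Nat.le_add_right _ _)) h
    have heq : (fun p => (((fun p => a p + (N + 1) * tm p) p : ℕ) : ℤ) + tDelta tm tp p)
        = natCast (fun p => (a p + tp p) + N * tm p) := by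
      funext p
      simp only [natCast, tDelta]
      push_cast
      ring
    rw [heq] at h1
    have h2 := ih (fun p => a p + tp p)
      (fun p => le_trans (ha p) (Nat.le_add_right _ _)) h1
    have heq2 : (natCast fun p => (a p + tp p) + N * tp p)
        = natCast (fun p => a p + (N + 1) * tp p) := by
      funext p; simp only [natCast]; push_cast; ring
    rwa [heq2] at h2

theorem stmt4 (n : ℕ) (hn : 1 ≤ n) (k : Fin n → ℤ) (c : ℤ) (tm tp : Fin n → ℕ)
    (hind : TInductive k c tm tp)
    (hor : dot k (tDelta tm tp) < 0) :
    (∀ i, 0 ≤ k i) ∨ (∀ i, k i ≤ 0) := by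
  by_contra hcon
  push_neg at hcon
  obtain ⟨⟨i, hi⟩, j, hj⟩ := hcon
  -- hi : k i < 0, hj : 0 < k j
  set D := dot k (tDelta tm tp) with hD
  set T := dot k (natCast tm) with hT
  set A := k j with hA
  set B := -k i with hB
  have hApos : 0 < A := hj
  have hBpos : 0 < B := by simp [hB]; linarith
  set N : ℕ := A.toNat with hNdef
  have hN : (N : ℤ) = A := Int.toNat_of_nonneg hApos.le
  set L : ℤ := c - ((N : ℤ) + 1) * T - 1 with hL
  set r : ℕ := ((-L) / B + 1).toNat with hrdef
  have hr : (-L) < (r : ℤ) * B := by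
    have h1 : (-L) < ((-L) / B + 1) * B := Int.lt_ediv_add_one_mul_self _ hBpos
    have h2 : ((-L) / B + 1) ≤ (r : ℤ) := Int.self_le_toNat _
    have h3 : ((-L) / B + 1) * B ≤ (r : ℤ) * B :=
      mul_le_mul_of_nonneg_right h2 hBpos.le
    linarith
  set x : ℤ := L + (r : ℤ) * B with hx
  have hxpos : 0 < x := by linarith
  set s : ℕ := (x / A + 1).toNat with hsdef
  have hsnn : (0 : ℤ) ≤ x / A + 1 := by
    have := Int.ediv_nonneg hxpos.le hApos.le
    linarith
  have hscast : (s : ℤ) = x / A + 1 := Int.toNat_of_nonneg hsnn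
  have hs1 : x < (s : ℤ) * A := by
    rw [hscast]; exact Int.lt_ediv_add_one_mul_self _ hApos
  have hs2 : (s : ℤ) * A ≤ x + A := by
    rw [hscast, add_mul, one_mul]
    have : x / A * A ≤ x := Int.ediv_mul_le x hApos.ne'
    linarith
  have hij : i ≠ j := by intro h; rw [h] at hi; linarith
  set a : Fin n → ℕ := fun p => tm p + (if p = j then s else 0) + (if p = i then r else 0)
    with hadef
  have ha : ∀ p, tm p ≤ a p := fun p =>
    (Nat.le_add_right _ _).trans (Nat.le_add_right _ _)
  have dotA : dot k (natCast a) = T + (s : ℤ) * A + (r : ℤ) * k i := by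
    have e1 : dot k (natCast a)
        = dot k (natCast fun p => tm p + (if p = j then s else 0))
          + dot k (natCast fun p => if p = i then r else 0) :=
      dot_natCast_add k _ _
    have e2 : dot k (natCast fun p => tm p + (if p = j then s else 0))
        = dot k (natCast tm) + dot k (natCast fun p => if p = j then s else 0) :=
      dot_natCast_add k _ _
    rw [e1, e2, dot_single, dot_single, hT, hA]
    ring
  -- base of the iteration
  have base : c ≤ dot k (natCast fun p => a p + N * tm p) := by
    rw [dot_add_nsmul, dotA, ← hT]
    have hvi : (r : ℤ) * k i = -((r : ℤ) * B) := by rw [hB]; ring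
    linarith
  have final := iter_lemma k c tm tp hind N a ha base
  rw [dot_add_nsmul, dotA] at final
  have hTD : dot k (natCast tp) = T + D := by
    have : D = dot k (natCast tp) - T := by
      simp only [hD, hT, dot, tDelta, natCast, mul_sub, Finset.sum_sub_distrib]
    linarith
  rw [hTD] at final
  have hDle : D ≤ -1 := by linarith
  have hND : (N : ℤ) * D ≤ (N : ℤ) * (-1) :=
    mul_le_mul_of_nonneg_left hDle (by positivity)
  have hvi : (r : ℤ) * k i = -((r : ℤ) * B) := by rw [hB]; ring
  -- final : c ≤ T + s*A + r*k i + N*(T + D); derive contradiction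
  have : (N : ℤ) * (T + D) = (N : ℤ) * T + (N : ℤ) * D := by ring
  nlinarith [hs2, hr, hN, hND]
end

section
/- Suppose there exist indices i ≠ j with k(i) > 0 and k(j) < 0. Then for every v ∈ ℤ^n and every b ∈ ℕ^n there exists m ∈ ℤ^n with m ≥ b, k·m = k·v, and m obtained from v by adding nonnegative integer combinations of syzygies of k. -/
open Finset

theorem stmt6 (n : ℕ) (hn : 2 ≤ n) (k : Fin n → ℤ) (i j : Fin n) (hij : i ≠ j)
    (hi : 0 < k i) (hj : k j < 0) :
    ∀ (v : Fin n → ℤ) (b : Fin n → ℕ),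
      ∃ m : Fin n → ℤ, (∀ p, (b p : ℤ) ≤ m p) ∧ dot k m = dot k v := by
  intro v b
  set t : Fin n → ℤ := fun p => max ((b p : ℤ) - v p) 0 with ht
  have htn : ∀ p, 0 ≤ t p := fun p => le_max_right _ _
  have htb : ∀ p, (b p : ℤ) - v p ≤ t p := fun p => le_max_left _ _
  set s : ℤ := t i + t j with hs
  have hs0 : 0 ≤ s := add_nonneg (htn i) (htn j)
  set E : Finset (Fin n) := (univ.erase i).erase j with hE
  set A : ℤ := ∑ q ∈ E, (if k q < 0 then (-k q) * t q else 0) with hA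
  set B : ℤ := ∑ q ∈ E, (if 0 < k q then k q * t q else 0) with hB
  have hA0 : 0 ≤ A := by
    apply Finset.sum_nonneg
    intro q _
    split
    · exact mul_nonneg (by omega) (htn q)
    · exact le_refl 0
  have hB0 : 0 ≤ B := by
    apply Finset.sum_nonneg
    intro q _
    split
    · exact mul_nonneg (by omega) (htn q)
    · exact le_refl 0
  set c : Fin n → ℤ := fun p => if 0 < k p then -k j else if k p < 0 then k i else 1 with hc
  have hc1 : ∀ p, 1 ≤ c p := by
    intro p
    simp only [hc]
    split
    · omega
    · split
      · omega
      · omega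
  refine ⟨fun p => if p = i then v i - k j * s + A
      else if p = j then v j + k i * s + B
      else v p + c p * t p, ?_, ?_⟩
  · intro p
    by_cases hpi : p = i
    · subst hpi
      simp only [if_pos rfl, ite_true]
      have h1 : s ≤ -k j * s := by nlinarith
      have h2 : t p ≤ s := by rw [hs]; linarith [htn j]
      have := htb p
      linarith
    · by_cases hpj : p = j
      · subst hpj
        simp only [if_neg hpi, if_pos rfl, ite_true]
        have h1 : s ≤ k i * s := by nlinarith
        have h2 : t p ≤ s := by rw [hs]; linarith [htn i]
        have := htb p
        linarith
      · simp only [if_neg hpi, if_neg hpj]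
        have h1 : t p ≤ c p * t p := by nlinarith [hc1 p, htn p]
        have := htb p
        linarith
  · -- dot equality
    have hiE : i ∉ E := by simp [hE]
    have hjE : j ∉ E := by simp [hE]
    have hjmem : j ∈ univ.erase i := by simp [Ne.symm hij]
    have hsplit : ∀ f : Fin n → ℤ, ∑ p, f p = f i + (f j + ∑ p ∈ E, f p) := by
      intro f
      rw [← Finset.add_sum_erase _ f (Finset.mem_univ i),
          ← Finset.add_sum_erase _ f hjmem]
    unfold dot
    rw [hsplit, hsplit (fun p => k p * v p)]
    simp only [if_pos rfl, if_neg (Ne.symm hij), if_neg hij, ite_true]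
    have hsum : ∑ p ∈ E, k p * (if p = i then v i - k j * s + A
        else if p = j then v j + k i * s + B else v p + c p * t p)
        = ∑ p ∈ E, (k p * v p + k p * c p * t p) := by
      apply Finset.sum_congr rfl
      intro p hp
      have hpi : p ≠ i := fun h => hiE (h ▸ hp)
      have hpj : p ≠ j := fun h => hjE (h ▸ hp)
      rw [if_neg hpi, if_neg hpj]; ring
    rw [hsum, Finset.sum_add_distrib]
    have key : k i * A + k j * B + ∑ p ∈ E, k p * c p * t p = 0 := by
      rw [hA, hB, Finset.mul_sum, Finset.mul_sum, ← Finset.sum_add_distrib,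
          ← Finset.sum_add_distrib]
      apply Finset.sum_eq_zero
      intro q _
      simp only [hc]
      rcases lt_trichotomy (k q) 0 with h | h | h
      · rw [if_pos h, if_neg (by omega), if_neg (by omega), if_pos h]; ring
      · rw [if_neg (by omega), if_neg (by omega), if_neg (by omega), if_neg (by omega)]
        simp [h]
      · rw [if_neg (by omega), if_pos h, if_pos h]; ring
    linarith
end

section
/- The half space (k,c) is t-inductive if and only if there is no finite sequence of entries of k, say k_{i₁}, …, k_{iℓ} (repetitions allowed, possibly ℓ = 0), such that c ≤ k·t⁻ + Σ_{j=1}^{ℓ} k_{i_j} < c − k·tΔ. -/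
open Finset

lemma list_sum_eq {n : ℕ} (k : Fin n → ℤ) (l : List (Fin n)) :
    (l.map k).sum = ∑ i, (l.count i : ℤ) * k i := by
  induction l with
  | nil => simp
  | cons a l ih =>
    simp only [List.map_cons, List.sum_cons, ih, List.count_cons]
    push_cast
    rw [Finset.sum_congr rfl (fun i _ => add_mul ((l.count i : ℤ)) _ _),
      Finset.sum_add_distrib]
    simp [Finset.sum_ite_eq]
    ring

lemma count_flat {n : ℕ} (f : Fin n → ℕ) (i : Fin n) :
    ((List.finRange n).flatMap fun j => List.replicate (f j) j).count i = f i := by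
  rw [List.count_flatMap, ← Fin.sum_univ_def]
  simp only [Function.comp, List.count_replicate, beq_iff_eq]
  rw [Finset.sum_ite_eq' Finset.univ i f]
  simp

lemma exists_list {n : ℕ} (k : Fin n → ℤ) (f : Fin n → ℕ) :
    ∃ l : List (Fin n), (l.map k).sum = ∑ i, (f i : ℤ) * k i := by
  refine ⟨(List.finRange n).flatMap fun i => List.replicate (f i) i, ?_⟩
  rw [list_sum_eq]
  refine Finset.sum_congr rfl fun i _ => ?_
  rw [count_flat]

lemma dot_split {n : ℕ} (k : Fin n → ℤ) (m : Fin n → ℕ) (tm tp : Fin n → ℕ) :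
    dot k (fun i => (m i : ℤ) + tDelta tm tp i)
      = dot k (natCast m) + dot k (tDelta tm tp) := by
  simp [dot, natCast, mul_add, Finset.sum_add_distrib]

theorem stmt7 (n : ℕ) (hn : 1 ≤ n) (k : Fin n → ℤ) (c : ℤ) (tm tp : Fin n → ℕ) :
    TInductive k c tm tp ↔
      ¬ ∃ l : List (Fin n),
        c ≤ dot k (natCast tm) + (l.map k).sum ∧
        dot k (natCast tm) + (l.map k).sum < c - dot k (tDelta tm tp) := by
  constructor
  · rintro hInd ⟨l, h1, h2⟩
    set m : Fin n → ℕ := fun i => tm i + l.count i with hm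
    have hdm : dot k (natCast m) = dot k (natCast tm) + (l.map k).sum := by
      rw [list_sum_eq]
      simp only [dot, natCast, hm]
      push_cast
      rw [← Finset.sum_add_distrib]
      refine Finset.sum_congr rfl fun i _ => by ring
    have := hInd m (fun i => Nat.le_add_right _ _) (by rw [hdm]; exact h1)
    rw [dot_split, hdm] at this
    omega
  · intro hne m hge hc
    rw [dot_split]
    by_contra hlt
    push_neg at hlt
    obtain ⟨l, hl⟩ := exists_list k (fun i => m i - tm i)
    refine hne ⟨l, ?_, ?_⟩ <;>
    · have hsum : dot k (natCast tm) + (l.map k).sum = dot k (natCast m) := by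
        rw [hl]; simp only [dot, natCast]; rw [← Finset.sum_add_distrib]
        refine Finset.sum_congr rfl fun i _ => ?_
        have := hge i
        push_cast [Nat.cast_sub this]
        ring
      rw [hsum]
      omega
end

section
/- Let (k,c) be a t-inductive half space with k·tΔ < 0, such that there exists m ∈ Act(t) ∩ Sol(k,c) and k is either componentwise nonnegative or componentwise nonpositive. Then every nonzero entry k(i) of k satisfies |k(i)| ≥ −k·tΔ. -/
open Finset

theorem stmt8 (n : ℕ) (hn : 1 ≤ n) (k : Fin n → ℤ) (c : ℤ) (tm tp : Fin n → ℕ)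
    (hind : TInductive k c tm tp)
    (hor : dot k (tDelta tm tp) < 0)
    (hex : ∃ m : Fin n → ℕ, (∀ i, tm i ≤ m i) ∧ c ≤ dot k (natCast m))
    (hdich : ((∀ i, 0 ≤ k i) ∧ dot k (natCast tm) < c - dot k (tDelta tm tp)) ∨
             ((∀ i, k i ≤ 0) ∧ c ≤ dot k (natCast tm))) :
    ∀ i, k i ≠ 0 → -(dot k (tDelta tm tp)) ≤ |k i| := by
  intro i hki
  set Δ := dot k (tDelta tm tp) with hΔ
  set a := dot k (natCast tm) with ha
  -- dot of an update
  have hupd : ∀ d : ℕ, dot k (natCast (Function.update tm i (tm i + d)))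
      = a + k i * d := by
    intro d
    have h1 : (fun j => k j * (natCast (Function.update tm i (tm i + d)) j))
        = Function.update (fun j => k j * ((tm j : ℤ))) i (k i * ((tm i : ℤ) + d)) := by
      funext j
      by_cases h : j = i
      · subst h; simp [natCast]
      · simp [Function.update, natCast, h]
    have h2 : dot k (natCast (Function.update tm i (tm i + d)))
        = ∑ j, Function.update (fun j => k j * ((tm j : ℤ))) i (k i * ((tm i : ℤ) + d)) j := by
      rw [dot, h1]
    rw [h2, Finset.sum_update_of_mem (Finset.mem_univ i)]
    have h3 : a = k i * (tm i : ℤ) + ∑ j ∈ Finset.univ.erase i, k j * (tm j : ℤ) := by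
      rw [ha, dot, ← Finset.add_sum_erase _ _ (Finset.mem_univ i)]
      rfl
    rw [h3, Finset.sdiff_singleton_eq_erase]; ring
  -- linearity for the inductive step
  have hlin : ∀ m : Fin n → ℕ,
      dot k (fun j => (m j : ℤ) + tDelta tm tp j) = dot k (natCast m) + Δ := by
    intro m
    simp only [dot, natCast, hΔ, mul_add, Finset.sum_add_distrib]
  -- key step: find d with c ≤ a + k i * d < c + |k i|
  suffices h : ∃ d : ℕ, c ≤ a + k i * d ∧ a + k i * d < c + |k i| by
    obtain ⟨d, hd1, hd2⟩ := h
    set m := Function.update tm i (tm i + d) with hm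
    have hact : ∀ j, tm j ≤ m j := by
      intro j
      by_cases h : j = i
      · subst h; simp [hm]
      · simp [hm, Function.update, h]
    have hsol : c ≤ dot k (natCast m) := by rw [hm, hupd d]; exact hd1
    have := hind m hact hsol
    rw [hlin m, hm, hupd d] at this
    -- c ≤ a + k i * d + Δ and a + k i * d < c + |k i|
    linarith
  rcases hdich with ⟨hpos, hlt⟩ | ⟨hneg, hge⟩
  · -- k ≥ 0 case
    have hkipos : 0 < k i := lt_of_le_of_ne (hpos i) (Ne.symm hki)
    have habs : |k i| = k i := abs_of_pos hkipos
    -- a < c, else tm is an active solution contradicting hlt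
    have haltc : a < c := by
      by_contra h
      push_neg at h
      have := hind tm (fun j => le_refl _) h
      rw [hlin tm] at this
      linarith
    set p := k i with hp
    have h0 : 0 ≤ (c - a - 1) / p := Int.ediv_nonneg (by omega) (le_of_lt hkipos)
    have htn : (((c - a - 1) / p + 1).toNat : ℤ) = (c - a - 1) / p + 1 :=
      Int.toNat_of_nonneg (by omega)
    have h1 : (c - a - 1) / p * p ≤ c - a - 1 := Int.ediv_mul_le _ (by omega)
    have h2 : c - a - 1 < ((c - a - 1) / p + 1) * p := Int.lt_ediv_add_one_mul_self _ hkipos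
    have h1' : p * ((c - a - 1) / p + 1) ≤ c - a - 1 + p := by
      rw [mul_add, mul_one, mul_comm]; linarith
    have h2' : c - a - 1 < p * ((c - a - 1) / p + 1) := by
      rw [mul_comm]; exact h2
    refine ⟨((c - a - 1) / p + 1).toNat, ?_, ?_⟩
    · rw [htn]
      have := Int.add_one_le_iff.mpr h2'
      linarith
    · rw [htn, habs]; linarith
  · -- k ≤ 0 case
    have hkineg : k i < 0 := lt_of_le_of_ne (hneg i) hki
    have habs : |k i| = -k i := abs_of_neg hkineg
    set q := -k i with hq
    have hqpos : 0 < q := by omega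
    have h0 : 0 ≤ (a - c) / q := Int.ediv_nonneg (by omega) (le_of_lt hqpos)
    have htn : (((a - c) / q).toNat : ℤ) = (a - c) / q := Int.toNat_of_nonneg h0
    have h1 : (a - c) / q * q ≤ a - c := Int.ediv_mul_le _ (by omega)
    have h2 : a - c < ((a - c) / q + 1) * q := Int.lt_ediv_add_one_mul_self _ hqpos
    have hkq : k i * ((a - c) / q) = -((a - c) / q * q) := by
      have hk : k i = -q := by omega
      rw [hk]; ring
    have h2' : a - c < (a - c) / q * q + q := by
      have := h2; rw [add_mul, one_mul] at this; linarith
    refine ⟨((a - c) / q).toNat, ?_, ?_⟩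
    · rw [htn, hkq]; linarith
    · rw [htn, habs, hkq]
      linarith
end

section
/- Let k ∈ ℤ^n, c ∈ ℤ, and m_f ∈ ℕ^n with k·m_f < c. Then the upward closure ↑m_f = { m ∈ ℕ^n : m ≥ m_f } is disjoint from Sol(k,c) = { m : k·m ≥ c } if and only if k ≤ 0 componentwise. -/
open Finset

theorem stmt11 (n : ℕ) (hn : 1 ≤ n) (k : Fin n → ℤ) (c : ℤ) (mf : Fin n → ℕ)
    (hmf : dot k (natCast mf) < c) :
    (∀ m : Fin n → ℕ, (∀ i, mf i ≤ m i) → dot k (natCast m) < c) ↔ (∀ i, k i ≤ 0) := by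
  constructor
  · intro h i
    by_contra hki
    push_neg at hki
    set t : ℕ := (c - dot k (natCast mf)).toNat with ht
    set m : Fin n → ℕ := fun j => if j = i then mf i + t else mf j with hm
    have hle : ∀ j, mf j ≤ m j := by
      intro j
      simp only [hm]
      split <;> simp_all [Nat.le_add_right]
    have hdot : dot k (natCast m) = dot k (natCast mf) + k i * t := by
      simp only [dot, natCast, hm]
      rw [show (∑ j, k j * ((mf j : ℤ))) + k i * t =
        ∑ j, (k j * (mf j : ℤ) + if j = i then k i * t else 0) by
          rw [Finset.sum_add_distrib, Finset.sum_ite_eq' univ i (fun _ => k i * (t:ℤ))]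
          simp]
      apply Finset.sum_congr rfl
      intro j _
      split
      · rename_i hj; subst hj; push_cast; ring
      · ring
    have htge : (t : ℤ) = c - dot k (natCast mf) := by
      rw [ht, Int.toNat_of_nonneg]; omega
    have : dot k (natCast m) ≥ c := by
      rw [hdot, htge]
      nlinarith [hki, sub_nonneg.mpr hmf.le]
    exact absurd (h m hle) (by omega)
  · intro h m hle
    have : dot k (natCast m) ≤ dot k (natCast mf) := by
      apply Finset.sum_le_sum
      intro i _
      have := h i
      have := hle i
      have hmi : (mf i : ℤ) ≤ (m i : ℤ) := by exact_mod_cast this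
      simp only [natCast]
      nlinarith
    omega
end

section
/- Let w ∈ ℕ^n (all entries positive), d ∈ ℕ a multiple of g = gcd(w), k = w (viewed in ℤ^n), a ∈ ℤ^n with k·a = g, t⁻ the positive part of a, t⁺ the negative part of a (so tΔ = −a), and c = d + k·t⁻. Then (k,c) is not t-inductive if and only if there exists x ∈ ℕ^n with w·x = d. -/
open Finset

theorem stmt13 (n : ℕ) (hn : 1 ≤ n) (w : Fin n → ℕ) (hw : ∀ i, 0 < w i)
    (d : ℕ) (hd : Finset.univ.gcd w ∣ d)
    (k : Fin n → ℤ) (hk : k = fun i => (w i : ℤ))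
    (a : Fin n → ℤ) (hag : dot k a = ((Finset.univ.gcd w : ℕ) : ℤ))
    (tm tp : Fin n → ℕ)
    (htm : tm = fun i => (a i).toNat) (htp : tp = fun i => (-(a i)).toNat)
    (c : ℤ) (hc : c = (d : ℤ) + dot k (natCast tm)) :
    (∃ x : Fin n → ℕ,
        c ≤ dot k (natCast x) + dot k (natCast tm) ∧
        dot k (natCast x) + dot k (natCast tm) < c - dot k (tDelta tm tp)) ↔
      ∃ x : Fin n → ℕ, ∑ i, w i * x i = d := by
  subst hk htm htp hc
  set g : ℕ := Finset.univ.gcd w with hg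
  have hgpos : 0 < g := by
    rcases Nat.eq_zero_or_pos g with h | h
    · exact absurd (Finset.gcd_eq_zero_iff.mp h ⟨0, hn⟩ (mem_univ _)) (hw _).ne'
    · exact h
  have hdelta : dot (fun i => (w i : ℤ)) (tDelta (fun i => (a i).toNat) (fun i => (-(a i)).toNat))
      = -(g : ℤ) := by
    have : ∀ i, tDelta (fun i => (a i).toNat) (fun i => (-(a i)).toNat) i = -(a i) := by
      intro i
      have := Int.toNat_sub_toNat_neg (-(a i))
      simpa [tDelta] using this
    rw [← hag]
    simp only [dot]
    rw [← Finset.sum_neg_distrib]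
    exact Finset.sum_congr rfl fun i _ => by rw [this i]; ring
  have hsum : ∀ x : Fin n → ℕ,
      dot (fun i => (w i : ℤ)) (natCast x) = ((∑ i, w i * x i : ℕ) : ℤ) := by
    intro x
    simp [dot, natCast]
  constructor
  · rintro ⟨x, h1, h2⟩
    rw [hdelta, hsum x] at *
    set N : ℕ := ∑ i, w i * x i with hN
    have hdN : d ≤ N := by exact_mod_cast by linarith
    have hNlt : N < d + g := by
      have h2' : (N : ℤ) < (d : ℤ) + (g : ℤ) := by linarith
      exact_mod_cast h2'
    have hgN : g ∣ N := Finset.dvd_sum fun i _ => Dvd.dvd.mul_right (Finset.gcd_dvd (mem_univ i)) _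
    have : g ∣ N - d := Nat.dvd_sub hgN hd
    have h0 : N - d = 0 := Nat.eq_zero_of_dvd_of_lt this (by omega)
    exact ⟨x, by omega⟩
  · rintro ⟨x, hx⟩
    refine ⟨x, ?_, ?_⟩
    · rw [hsum x, hx]
    · rw [hsum x, hx, hdelta]
      have : (0 : ℤ) < g := by exact_mod_cast hgpos
      linarith
end

section
/- Let a₁, …, aₙ be positive integers with gcd 1 and each aᵢ ≥ 2. Then every integer x ≥ (max aᵢ − 1)·(min aᵢ − 1) can be written as a nonnegative integer combination x = Σ mᵢ·aᵢ with mᵢ ∈ ℕ. In particular the Frobenius number of a₁,…,aₙ is at most (max aᵢ − 1)(min aᵢ − 1) − 1. -/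
open Finset

theorem bezout_finset {ι : Type*} [DecidableEq ι] (a : ι → ℕ) (s : Finset ι) :
    ∃ c : ι → ℤ, ∑ i ∈ s, c i * (a i : ℤ) = ((s.gcd a : ℕ) : ℤ) := by
  induction s using Finset.induction_on with
  | empty => exact ⟨0, by simp⟩
  | @insert j s hj ih =>
    obtain ⟨c, hc⟩ := ih
    have hg : (insert j s).gcd a = Nat.gcd (a j) (s.gcd a) := Finset.gcd_insert
    refine ⟨fun i => if i = j then Nat.gcdA (a j) (s.gcd a)
      else Nat.gcdB (a j) (s.gcd a) * c i, ?_⟩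
    rw [Finset.sum_insert hj, hg, Nat.gcd_eq_gcd_ab]
    have hsum : ∑ i ∈ s, (if i = j then Nat.gcdA (a j) (s.gcd a)
        else Nat.gcdB (a j) (s.gcd a) * c i) * (a i : ℤ)
        = Nat.gcdB (a j) (s.gcd a) * ∑ i ∈ s, c i * (a i : ℤ) := by
      rw [Finset.mul_sum]
      refine Finset.sum_congr rfl fun i hi => ?_
      have : i ≠ j := fun h => hj (h ▸ hi)
      simp [this, mul_assoc]
    rw [hsum, hc]
    simp
    ring

theorem stmt14 (n : ℕ) (hn : 1 ≤ n) (a : Fin n → ℕ)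
    (h2 : ∀ i, 2 ≤ a i) (hgcd : Finset.univ.gcd a = 1) :
    ∀ x : ℕ,
      (Finset.univ.sup a - 1) * ((Finset.univ.inf' (univ_nonempty_iff.mpr ⟨⟨0, hn⟩⟩) a) - 1) ≤ x →
      ∃ m : Fin n → ℕ, ∑ i, m i * a i = x := by
  classical
  set b := Finset.univ.inf' (univ_nonempty_iff.mpr ⟨⟨0, hn⟩⟩) a with hbdef
  set A := Finset.univ.sup a with hAdef
  -- basic facts
  obtain ⟨j, -, hj⟩ := Finset.exists_mem_eq_inf' (univ_nonempty_iff.mpr ⟨⟨0, hn⟩⟩) a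
  have hbj : a j = b := hj.symm
  have hb2 : 2 ≤ b := hbj ▸ h2 j
  have hbpos : 0 < b := by omega
  have hA : ∀ i, a i ≤ A := fun i => Finset.le_sup (Finset.mem_univ i)
  have hbA : b ≤ A := hbj ▸ hA j
  -- the semigroup
  set S : ℕ → Prop := fun x => ∃ m : Fin n → ℕ, ∑ i, m i * a i = x with hSdef
  have hSadd : ∀ x y, S x → S y → S (x + y) := by
    rintro x y ⟨m, hm⟩ ⟨m', hm'⟩
    exact ⟨fun i => m i + m' i, by simp [add_mul, Finset.sum_add_distrib, hm, hm']⟩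
  have hSa : ∀ i, S (a i) := by
    intro i
    exact ⟨fun k => if k = i then 1 else 0, by simp [Finset.sum_ite_eq']⟩
  have hSmul : ∀ k x, S x → S (k * x) := by
    rintro k x ⟨m, hm⟩
    refine ⟨fun i => k * m i, ?_⟩
    rw [← hm, Finset.mul_sum]
    simp [mul_assoc]
  -- an element of S congruent to 1 mod b
  obtain ⟨c, hc⟩ := bezout_finset a Finset.univ
  rw [hgcd] at hc
  push_cast at hc
  have hone : ∃ s1, S s1 ∧ s1 % b = 1 % b := by
    refine ⟨∑ i, (c i % b).toNat * a i, ⟨fun i => (c i % b).toNat, rfl⟩, ?_⟩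
    have hcast : ((∑ i, (c i % (b : ℤ)).toNat * a i : ℕ) : ℤ) % (b : ℤ) = (1 : ℤ) % (b : ℤ) := by
      push_cast
      have hto : ∀ i : Fin n, ((c i % (b : ℤ)).toNat : ℤ) = c i % b := fun i =>
        Int.toNat_of_nonneg (Int.emod_nonneg _ (by exact_mod_cast hbpos.ne'))
      calc (∑ i, ((c i % (b : ℤ)).toNat : ℤ) * a i) % (b : ℤ)
          = (∑ i, (c i % b) * (a i : ℤ)) % b := by
            congr 1; exact Finset.sum_congr rfl fun i _ => by rw [hto i]
        _ = (∑ i, (c i % b * (a i : ℤ)) % b) % b := Finset.sum_int_mod _ _ _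
        _ = (∑ i, (c i * (a i : ℤ)) % b) % b := by
            congr 1; refine Finset.sum_congr rfl fun i _ => ?_
            rw [Int.mul_emod, Int.emod_emod_of_dvd _ dvd_rfl, ← Int.mul_emod]
        _ = (∑ i, c i * (a i : ℤ)) % b := (Finset.sum_int_mod _ _ _).symm
        _ = 1 % b := by rw [hc]
    exact_mod_cast hcast
  obtain ⟨s1, hs1S, hs1⟩ := hone
  -- every residue class contains an element of S
  have hex : ∀ r : ℕ, ∃ s, S s ∧ s % b = r % b := by
    intro r
    refine ⟨r * s1, hSmul r s1 hs1S, ?_⟩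
    have : r * s1 ≡ r * 1 [MOD b] := Nat.ModEq.mul_left r hs1
    simpa [Nat.ModEq] using this
  -- Apery elements
  set t : ℕ → ℕ := fun r => Nat.find (hex r) with htdef
  have htS : ∀ r, S (t r) := fun r => (Nat.find_spec (hex r)).1
  have htmod : ∀ r, t r % b = r % b := fun r => (Nat.find_spec (hex r)).2
  have htmin : ∀ r s, S s → s % b = r % b → t r ≤ s := fun r s h1 h2 =>
    Nat.find_min' (hex r) ⟨h1, h2⟩
  -- growth lemma
  have key : ∀ v r, r < b → t r ≤ v →
      t r ≤ A * ((Finset.range b).filter (fun r' => t r' < t r)).card := by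
    intro v
    induction v with
    | zero => intro r _ h; omega
    | succ v ih =>
      intro r hr htv
      by_cases h0 : t r ≤ v
      · exact ih r hr h0
      have htpos : 0 < t r := by omega
      obtain ⟨m, hm⟩ := htS r
      have hmx : ∃ i, m i ≠ 0 := by
        by_contra h
        push_neg at h
        rw [Finset.sum_eq_zero (fun i _ => by rw [h i]; ring)] at hm
        omega
      obtain ⟨i, hi⟩ := hmx
      have hai : a i ≤ t r := by
        calc a i ≤ m i * a i := Nat.le_mul_of_pos_left _ (Nat.pos_of_ne_zero hi)
        _ ≤ ∑ k, m k * a k := Finset.single_le_sum (f := fun k => m k * a k)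
          (fun k _ => Nat.zero_le _) (Finset.mem_univ i)
        _ = t r := hm
      -- t r - a i ∈ S
      have hS' : S (t r - a i) := by
        refine ⟨Function.update m i (m i - 1), ?_⟩
        have hsplit : ∀ f : Fin n → ℕ, ∑ k, f k * a k
            = f i * a i + ∑ k ∈ Finset.univ.erase i, f k * a k := fun f =>
          (Finset.add_sum_erase _ _ (Finset.mem_univ i)).symm
        rw [hsplit, Function.update_self]
        rw [hsplit] at hm
        have heq : ∑ k ∈ Finset.univ.erase i, Function.update m i (m i - 1) k * a k
            = ∑ k ∈ Finset.univ.erase i, m k * a k := by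
          refine Finset.sum_congr rfl fun k hk => ?_
          rw [Function.update_of_ne (Finset.ne_of_mem_erase hk)]
        rw [heq]
        have h1 : (m i - 1) * a i = m i * a i - a i := Nat.sub_one_mul _ _
        have h2 : a i ≤ m i * a i := Nat.le_mul_of_pos_left _ (Nat.pos_of_ne_zero hi)
        omega
      set r'' := (t r - a i) % b with hr''def
      have hr''b : r'' < b := Nat.mod_lt _ hbpos
      have ht'' : t r'' ≤ t r - a i := htmin r'' _ hS' (Nat.mod_mod _ _).symm
      have hlt : t r'' < t r := by
        have := h2 i
        omega
      -- t r ≤ t r'' + a i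
      have hup : t r ≤ t r'' + a i := by
        refine htmin r _ (hSadd _ _ (htS r'') (hSa i)) ?_
        have e1 : t r'' % b = (t r - a i) % b := by
          rw [htmod r'', hr''def, Nat.mod_mod]
        have e2 : (t r'' + a i) % b = ((t r - a i) + a i) % b := Nat.ModEq.add_right _ e1
        rw [e2, Nat.sub_add_cancel hai]
        exact htmod r
      -- cardinality step
      have hcards : ((Finset.range b).filter (fun r' => t r' < t r'')).card + 1
          ≤ ((Finset.range b).filter (fun r' => t r' < t r)).card := by
        have hss : (Finset.range b).filter (fun r' => t r' < t r'')
            ⊂ (Finset.range b).filter (fun r' => t r' < t r) := by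
          constructor
          · intro y hy
            simp only [Finset.mem_filter] at hy ⊢
            exact ⟨hy.1, hy.2.trans hlt⟩
          · intro hsub
            have : r'' ∈ (Finset.range b).filter (fun r' => t r' < t r) := by
              simp [Finset.mem_filter, Finset.mem_range, hr''b, hlt]
            have := hsub this
            simp [Finset.mem_filter] at this
        exact Finset.card_lt_card hss
      have ihr'' := ih r'' hr''b (by omega)
      calc t r ≤ t r'' + a i := hup
        _ ≤ A * ((Finset.range b).filter (fun r' => t r' < t r'')).card + A :=
          Nat.add_le_add ihr'' (hA i)
        _ = A * (((Finset.range b).filter (fun r' => t r' < t r'')).card + 1) := by ring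
        _ ≤ A * ((Finset.range b).filter (fun r' => t r' < t r)).card :=
          Nat.mul_le_mul_left _ hcards
  -- bound t r ≤ A * (b - 1)
  have tbound : ∀ r, r < b → t r ≤ A * (b - 1) := by
    intro r hr
    have h1 := key (t r) r hr le_rfl
    have hcard : ((Finset.range b).filter (fun r' => t r' < t r)).card ≤ b - 1 := by
      have hss : (Finset.range b).filter (fun r' => t r' < t r) ⊂ Finset.range b := by
        constructor
        · exact Finset.filter_subset _ _
        · intro hsub
          have : r ∈ (Finset.range b).filter (fun r' => t r' < t r) :=
            hsub (Finset.mem_range.mpr hr)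
          simp [Finset.mem_filter] at this
      have := Finset.card_lt_card hss
      rw [Finset.card_range] at this
      omega
    calc t r ≤ A * ((Finset.range b).filter (fun r' => t r' < t r)).card := h1
      _ ≤ A * (b - 1) := Nat.mul_le_mul_left _ hcard
  -- conclusion
  intro x hx
  set r := x % b with hrdef
  have hrb : r < b := Nat.mod_lt _ hbpos
  have htr := tbound r hrb
  have hAb1 : (A - 1) * (b - 1) = A * (b - 1) - (b - 1) := by
    rw [Nat.sub_one_mul]
  have hxt : t r ≤ x := by
    by_contra h
    push_neg at h
    -- x < t r, both ≡ r mod b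
    have hmeq : t r % b = x % b := by rw [htmod r, hrdef, Nat.mod_mod]
    have hdvd : b ∣ t r - x := (Nat.modEq_iff_dvd' h.le).mp hmeq.symm
    have : x + b ≤ t r := by
      obtain ⟨k, hk⟩ := hdvd
      have hk0 : k ≠ 0 := by rintro rfl; omega
      have : b ≤ b * k := Nat.le_mul_of_pos_right _ (Nat.pos_of_ne_zero hk0)
      omega
    rw [hAb1] at hx
    obtain ⟨Q, hQ⟩ : ∃ Q, A * (b - 1) = Q := ⟨_, rfl⟩
    rw [hQ] at htr hx
    omega
  -- x = t r + k * b
  have hmeq2 : t r % b = x % b := by rw [htmod r, hrdef, Nat.mod_mod]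
  have hdvd : b ∣ x - t r := (Nat.modEq_iff_dvd' hxt).mp hmeq2
  obtain ⟨k, hk⟩ := hdvd
  rw [mul_comm] at hk
  have hxeq : x = t r + k * b := by omega
  have : S x := by
    rw [hxeq]
    exact hSadd _ _ (htS r) (by rw [← hbj]; exact hSmul k _ (hSa j))
  exact this
end

section
/- Let (k,c) be a non-trivial t-inductive half space with k ≥ 0 componentwise. Let y be the Frobenius number of k(1)/g, …, k(n)/g where g = gcd(k) (restricted to nonzero entries). Then k·t⁻ + k·tΔ < c ≤ g·y + k·t⁻. -/
open Finset

theorem stmt15 (n : ℕ) (hn : 1 ≤ n) (k : Fin n → ℤ) (c : ℤ) (tm tp : Fin n → ℕ)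
    (hk0 : ∀ i, 0 ≤ k i) (hknz : k ≠ 0)
    (hor : dot k (tDelta tm tp) < 0)
    (hnt : dot k (natCast tm) < c - dot k (tDelta tm tp))
    (hind : ¬ ∃ x : Fin n → ℕ,
        c ≤ dot k (natCast x) + dot k (natCast tm) ∧
        dot k (natCast x) + dot k (natCast tm) < c - dot k (tDelta tm tp))
    (g : ℤ) (hg : g = Finset.univ.gcd k)
    (y : ℤ)
    (hy1 : ¬ ∃ m : Fin n → ℕ, ∑ i, (m i : ℤ) * (k i / g) = y)
    (hy2 : ∀ z : ℤ, y < z → ∃ m : Fin n → ℕ, ∑ i, (m i : ℤ) * (k i / g) = z) :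
    dot k (natCast tm) + dot k (tDelta tm tp) < c ∧ c ≤ g * y + dot k (natCast tm) := by
  have hgdvd : ∀ i, g ∣ k i := fun i => hg ▸ Finset.gcd_dvd (Finset.mem_univ i)
  have hgnn : 0 ≤ g :=
    hg ▸ Int.nonneg_of_normalize_eq_self (Finset.normalize_gcd)
  have hgpos : 0 < g := by
    rcases hgnn.lt_or_eq with h | h
    · exact h
    · exfalso
      apply hknz
      funext i
      have := (Finset.gcd_eq_zero_iff.mp (hg ▸ h.symm)) i (Finset.mem_univ i)
      simpa using this
  have hdvdD : g ∣ dot k (tDelta tm tp) := by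
    apply Finset.dvd_sum
    intro i _
    exact Dvd.dvd.mul_right (hgdvd i) _
  have hgle : g ≤ -dot k (tDelta tm tp) := by
    apply Int.le_of_dvd (by linarith) (dvd_neg.mpr hdvdD)
  refine ⟨by linarith, ?_⟩
  by_contra hc
  push_neg at hc
  set a := c - dot k (natCast tm) with ha
  set z := (a + g - 1) / g with hz
  have hmod : 0 ≤ (a + g - 1) % g := Int.emod_nonneg _ (by linarith)
  have hmodlt : (a + g - 1) % g < g := Int.emod_lt_of_pos _ hgpos
  have heq : g * z + (a + g - 1) % g = a + g - 1 := Int.mul_ediv_add_emod _ _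
  have hz1 : a ≤ g * z := by linarith
  have hz2 : g * z < a + g := by linarith
  have hzy : y < z := by nlinarith
  obtain ⟨m, hm⟩ := hy2 z hzy
  have hkm : dot k (natCast m) = g * z := by
    rw [← hm, dot, Finset.mul_sum]
    apply Finset.sum_congr rfl
    intro i _
    rw [natCast]
    rw [mul_comm ((m i : ℤ)) _, ← mul_assoc, Int.mul_ediv_cancel' (hgdvd i)]
  exact hind ⟨m, by rw [hkm]; constructor <;> linarith⟩
end

section
/- In the Petri net N_n (n ≥ 3), the half space (k,c) with k(j) = −n, k(i) = −(n+1) for i ≠ j, and c = −n(n+1) is inductive for all transitions t₁,…,tₙ, and separates m₀ = (1,…,1) from m_f = (2,…,2): k·m₀ ≥ c and k·m_f < c. -/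
open Finset

theorem stmt18 (n : ℕ) (hn : 3 ≤ n) (j : Fin n)
    (k : Fin n → ℤ) (hk : k = fun i => if i = j then -(n : ℤ) else -((n : ℤ) + 1))
    (c : ℤ) (hc : c = -((n : ℤ) * ((n : ℤ) + 1)))
    (tΔ : Fin n → Fin n → ℤ)
    (htΔ : tΔ = fun i l => if l = i then (if i = j then (n : ℤ) else (n : ℤ) - 1) else -1) :
    (∀ i : Fin n,
      ¬ ∃ x : Fin n → ℕ,
        c ≤ dot k (natCast x) + dot k (fun _ => (1 : ℤ)) ∧
        dot k (natCast x) + dot k (fun _ => (1 : ℤ)) < c - dot k (tΔ i)) ∧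
    c ≤ dot k (fun _ => (1 : ℤ)) ∧ dot k (fun _ => (2 : ℤ)) < c := by
  have hn' : (3:ℤ) ≤ (n:ℤ) := by exact_mod_cast hn
  -- sum of k
  have hS : dot k (fun _ => (1 : ℤ)) = c + 1 := by
    subst hk hc
    have h1 : ∀ i : Fin n, (if i = j then -(n:ℤ) else -((n:ℤ)+1)) * 1
        = -((n:ℤ)+1) + (if i = j then (1:ℤ) else 0) := by
      intro i; split <;> ring
    simp only [dot, h1, Finset.sum_add_distrib, Finset.sum_const, Finset.card_univ,
      Fintype.card_fin, Finset.sum_ite_eq' Finset.univ j, Finset.mem_univ, if_true,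
      nsmul_eq_mul]
    ring
  have hdx : ∀ x : Fin n → ℕ, dot k (natCast x)
      = -((n:ℤ)+1) * (∑ i, (x i : ℤ)) + (x j : ℤ) := by
    intro x
    subst hk
    have h1 : ∀ i : Fin n, (if i = j then -(n:ℤ) else -((n:ℤ)+1)) * (x i : ℤ)
        = -((n:ℤ)+1) * (x i : ℤ) + (if i = j then (x i : ℤ) else 0) := by
      intro i; split <;> ring
    simp only [dot, natCast, h1, Finset.sum_add_distrib,
      Finset.sum_ite_eq' Finset.univ j, Finset.mem_univ, if_true, ← Finset.mul_sum]
  have hdT : ∀ i : Fin n, dot k (tΔ i) = -(dot k (fun _ => (1:ℤ))) + c := by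
    intro i
    subst hk htΔ hc
    have h1 : ∀ l : Fin n,
        (if l = j then -(n:ℤ) else -((n:ℤ)+1)) *
          (if l = i then (if i = j then (n:ℤ) else (n:ℤ) - 1) else -1)
        = -((if l = j then -(n:ℤ) else -((n:ℤ)+1)) * 1)
          + (if l = i then -((n:ℤ)*((n:ℤ)+1)) else 0) := by
      intro l
      by_cases hli : l = i
      · subst hli
        by_cases hij : l = j <;> simp [hij] <;> ring
      · simp [hli]
    simp only [dot, h1, Finset.sum_add_distrib, Finset.sum_ite_eq' Finset.univ i,
      Finset.mem_univ, if_true, ← Finset.sum_neg_distrib]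
  refine ⟨?_, ?_, ?_⟩
  · rintro i ⟨x, h1, h2⟩
    rw [hdT i, hS] at h2
    rw [hS] at h1
    rw [hdx] at h1 h2
    set T : ℤ := ∑ i, (x i : ℤ) with hT
    have hT0 : 0 ≤ T := Finset.sum_nonneg fun i _ => by positivity
    have hxj : (x j : ℤ) ≤ T := Finset.single_le_sum (f := fun i => (x i : ℤ))
      (fun i _ => by positivity) (Finset.mem_univ j)
    have hxj0 : (0:ℤ) ≤ (x j : ℤ) := by positivity
    have heq : -((n:ℤ)+1) * T + (x j : ℤ) = -1 := by omega
    rcases eq_or_lt_of_le hT0 with h | h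
    · rw [← h] at heq; omega
    · have h1T : (1:ℤ) ≤ T := h
      nlinarith [mul_le_mul hn' h1T zero_le_one (by linarith : (0:ℤ) ≤ (n:ℤ))]
  · rw [hS]; omega
  · have h2 : dot k (fun _ => (2:ℤ)) = 2 * dot k (fun _ => (1:ℤ)) := by
      simp only [dot, mul_one, ← Finset.mul_sum]
      rw [Finset.mul_sum]
      exact Finset.sum_congr rfl fun i _ => by ring
    rw [h2, hS, hc]
    nlinarith
end

section
/- In the Petri net N_n (n ≥ 3), every half space (k,c) with k·m₀ ≥ c > k·m_f (where m₀ = (1,…,1), m_f = (2,…,2)) satisfies k·tΔᵢ < 0 for at least one transition tᵢ; i.e., no separating half space is oriented towards all transitions. -/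
open Finset

theorem stmt19 (n : ℕ) (hn : 3 ≤ n) (j : Fin n)
    (tΔ : Fin n → Fin n → ℤ)
    (htΔ : tΔ = fun i l => if l = i then (if i = j then (n : ℤ) else (n : ℤ) - 1) else -1) :
    ∀ (k : Fin n → ℤ) (c : ℤ),
      c ≤ dot k (fun _ => (1 : ℤ)) → dot k (fun _ => (2 : ℤ)) < c →
      ∃ i : Fin n, dot k (tΔ i) < 0 := by
  intro k c h1 h2
  set S : ℤ := ∑ l, k l with hS
  have hdot : ∀ i : Fin n, dot k (tΔ i) =
      (if i = j then (n : ℤ) + 1 else (n : ℤ)) * k i - S := by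
    intro i
    subst htΔ
    simp only [dot]
    have hcongr : ∀ l ∈ Finset.univ, k l * (if l = i then (if i = j then (n : ℤ) else (n : ℤ) - 1) else -1)
        = (if l = i then ((if i = j then (n : ℤ) + 1 else (n : ℤ)) * k l) else 0) - k l := by
      intro l _
      split_ifs <;> ring
    rw [Finset.sum_congr rfl hcongr, Finset.sum_sub_distrib, Finset.sum_ite_eq' Finset.univ i]
    simp [hS]
  -- S < 0
  have hS1 : dot k (fun _ => (1 : ℤ)) = S := by simp [dot, hS]
  have hS2 : dot k (fun _ => (2 : ℤ)) = 2 * S := by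
    simp only [dot, hS, Finset.sum_mul, mul_comm]
  have hSneg : S < 0 := by
    rw [hS1] at h1; rw [hS2] at h2; linarith
  by_contra hcon
  push_neg at hcon
  have hcon' : ∀ i : Fin n, (0 : ℤ) ≤ (if i = j then (n : ℤ) + 1 else (n : ℤ)) * k i - S := by
    intro i; rw [← hdot]; exact hcon i
  obtain ⟨ℓ, -, hmin⟩ := Finset.exists_min_image Finset.univ k ⟨j, Finset.mem_univ j⟩
  have hnpos : (0 : ℤ) < n := by exact_mod_cast Nat.lt_of_lt_of_le (by norm_num) hn
  have hsum_ge : (n : ℤ) * k ℓ ≤ S := by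
    have := Finset.card_nsmul_le_sum Finset.univ k (k ℓ) (fun i _ => hmin i (Finset.mem_univ i))
    simpa [hS, nsmul_eq_mul, mul_comm] using this
  have hkℓneg : k ℓ < 0 := by
    by_contra h; push_neg at h
    have : (0:ℤ) ≤ (n:ℤ) * k ℓ := mul_nonneg (le_of_lt hnpos) h
    linarith
  by_cases hlj : ℓ = j
  · have := hcon' ℓ
    rw [if_pos hlj] at this
    nlinarith
  · have hℓ := hcon' ℓ
    rw [if_neg hlj] at hℓ
    have heq : (n : ℤ) * k ℓ = S := le_antisymm hsum_ge (by linarith)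
    -- all entries equal k ℓ, in particular k j = k ℓ
    have hzero : ∑ i, (k i - k ℓ) = 0 := by
      rw [Finset.sum_sub_distrib, Finset.sum_const, Finset.card_univ, Fintype.card_fin,
        nsmul_eq_mul, ← hS]
      linarith [heq]
    have hall := (Finset.sum_eq_zero_iff_of_nonneg
      (fun i _ => sub_nonneg.mpr (hmin i (Finset.mem_univ i)))).mp hzero
    have hkj : k j = k ℓ := by
      have := hall j (Finset.mem_univ j); linarith
    have hj := hcon' j
    rw [if_pos rfl] at hj
    rw [hkj, ← heq] at hj
    nlinarith
end
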